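/- Let x ∈ 𝒳. Then x is an extremal in 𝒳' if and only if the tangent digraph 𝒟_x satisfies all of: (i) no nonempty proper subset of Supp(x) is isolated in 𝒟_x; (ii) 𝒟_x does not contain two node-disjoint cycles; (iii) at most one node of Supp(x) is a variable node of 𝒟_x. -/

import Mathlib

/-!
`x` fails to be extremal iff it can be lowered by a small `ε > 0` on each of two disjoint nonempty
sets `U, V ⊆ Supp x` without leaving `𝒳`, and lowering on `U` is possible iff every node outside
`U` with an incoming arc of `𝒟ₓ` has one from outside `U`. A failure of (i) or (iii) yields such a
pair at once: an isolated set and its complement, or two variable singletons. Under (iii), counting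
shows that at most one node lacks a sole predecessor, so of two disjoint cycles one is entered only
from itself; the nodes reachable from the other cycle and their complement are then such a pair.
Conversely, under (iii) one of `U`, `V` consists of invariable nodes, which (i) and (ii) rule out.
-/

open scoped Classical

noncomputable section

/-- Max-plus matrix-vector product: `(A ⊗ x) i = max_j (A i j + x j)`. -/
def mpApply {n : ℕ} (A : Matrix (Fin n) (Fin n) (WithBot ℝ)) (x : Fin n → WithBot ℝ)
    (i : Fin n) : WithBot ℝ :=
  Finset.univ.sup fun j => A i j + x j

/-- The solution set `𝒳` of `A ⊗ x ≥ x`, `x ≠ -∞`. -/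
def SuperEig {n : ℕ} (A : Matrix (Fin n) (Fin n) (WithBot ℝ)) : Set (Fin n → WithBot ℝ) :=
  {x | (∀ i, x i ≤ mpApply A x i) ∧ x ≠ fun _ => (⊥ : WithBot ℝ)}

/-- `𝒳' = 𝒳 ∪ {-∞}`. -/
def SuperEig' {n : ℕ} (A : Matrix (Fin n) (Fin n) (WithBot ℝ)) : Set (Fin n → WithBot ℝ) :=
  SuperEig A ∪ {fun _ => (⊥ : WithBot ℝ)}

/-- Support of a vector. -/
def Supp {n : ℕ} (x : Fin n → WithBot ℝ) : Set (Fin n) := {i | x i ≠ ⊥}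

/-- `v` is an extremal in `𝒳'`. -/
def IsExtremal {n : ℕ} (A : Matrix (Fin n) (Fin n) (WithBot ℝ)) (v : Fin n → WithBot ℝ) :
    Prop :=
  v ∈ SuperEig' A ∧
    ∀ y ∈ SuperEig' A, ∀ z ∈ SuperEig' A, v = (fun i => y i ⊔ z i) → v = y ∨ v = z

/-- `Arc A x a b` : there is an arc from `a` to `b` in the tangent digraph `𝒟ₓ`, i.e.,
`a, b ∈ Supp x`, `A b a + x a = x b` and `A b k + x k ≤ x b` for all `k`. -/
def Arc {n : ℕ} (A : Matrix (Fin n) (Fin n) (WithBot ℝ)) (x : Fin n → WithBot ℝ)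
    (a b : Fin n) : Prop :=
  x a ≠ ⊥ ∧ x b ≠ ⊥ ∧ A b a + x a = x b ∧ ∀ k, A b k + x k ≤ x b

/-- `i` is a I-variable node: no outgoing arc other than possibly the loop `(i,i)`. -/
def IVar {n : ℕ} (A : Matrix (Fin n) (Fin n) (WithBot ℝ)) (x : Fin n → WithBot ℝ)
    (i : Fin n) : Prop :=
  x i ≠ ⊥ ∧ ∀ j, Arc A x i j → j = i

/-- `i` is a II-variable node: the endnode of any outgoing arc from `i` except the loop
has another incoming arc. -/
def IIVar {n : ℕ} (A : Matrix (Fin n) (Fin n) (WithBot ℝ)) (x : Fin n → WithBot ℝ)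
    (i : Fin n) : Prop :=
  x i ≠ ⊥ ∧ ∀ j, j ≠ i → Arc A x i j → ∃ k, k ≠ i ∧ Arc A x k j

/-- `i` is a variable node: I-variable or II-variable. -/
def VarNode {n : ℕ} (A : Matrix (Fin n) (Fin n) (WithBot ℝ)) (x : Fin n → WithBot ℝ)
    (i : Fin n) : Prop :=
  IVar A x i ∨ IIVar A x i

/-- `i` is an invariable node: some outgoing arc `(i,j)` with `j ≠ i` is the only incoming
arc of `j`. -/
def Invariable {n : ℕ} (A : Matrix (Fin n) (Fin n) (WithBot ℝ)) (x : Fin n → WithBot ℝ)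
    (i : Fin n) : Prop :=
  x i ≠ ⊥ ∧ ∃ j, j ≠ i ∧ Arc A x i j ∧ ∀ k, Arc A x k j → k = i

/-- `W` is an isolated node set in `𝒟ₓ`: `W ⊆ Supp x` and no arc joins `W` and its
complement in either direction. -/
def IsolatedSet {n : ℕ} (A : Matrix (Fin n) (Fin n) (WithBot ℝ)) (x : Fin n → WithBot ℝ)
    (W : Set (Fin n)) : Prop :=
  W ⊆ Supp x ∧ ∀ a b, Arc A x a b → (a ∈ W ↔ b ∈ W)

/-- `𝒳^{≤ x}`: solutions below `x` and different from `x`. -/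
def BelowSet {n : ℕ} (A : Matrix (Fin n) (Fin n) (WithBot ℝ)) (x : Fin n → WithBot ℝ) :
    Set (Fin n → WithBot ℝ) :=
  {y ∈ SuperEig A | y ≤ x ∧ y ≠ x}

/-- A cycle of length `k ≥ 1` in the tangent digraph `𝒟ₓ`, given by the nodes
`c 0, c 1, …, c (k-1), c 0`. Its node set is `c '' Set.Iio k`. -/
def IsCycle {n : ℕ} (A : Matrix (Fin n) (Fin n) (WithBot ℝ)) (x : Fin n → WithBot ℝ)
    (k : ℕ) (c : ℕ → Fin n) : Prop :=
  1 ≤ k ∧ ∀ t < k, Arc A x (c t) (c ((t + 1) % k))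

open Topology

theorem Set.ncard_le_ncard_of_leftUnique {α β : Type*} [Finite β] {s : Set α} {t : Set β}
    {r : α → β → Prop} (hr : Relator.LeftUnique r) (hs : ∀ a ∈ s, ∃ b ∈ t, r a b) :
    s.ncard ≤ t.ncard := by
  rcases s.eq_empty_or_nonempty with rfl | ⟨a₀, ha₀⟩
  · simp
  have : Nonempty β := let ⟨b, _⟩ := hs a₀ ha₀; ⟨b⟩
  choose! f hft hfr using hs
  exact Set.ncard_le_ncard_of_injOn f hft fun a ha a' ha' h => hr (hfr a ha) (h ▸ hfr a' ha')

theorem Set.forall_exists_rel_of_leftUnique {α : Type*} [Finite α] {s : Set α}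
    {r : α → α → Prop} (hr : Relator.LeftUnique r) (hs : ∀ a ∈ s, ∃ b ∈ s, r a b) :
    ∀ b ∈ s, ∃ a ∈ s, r a b := by
  have hsep : {b ∈ s | ∃ a ∈ s, r a b} = s :=
    Set.eq_of_subset_of_ncard_le (Set.sep_subset _ _) <| Set.ncard_le_ncard_of_leftUnique hr
      fun a ha => let ⟨b, hb, hab⟩ := hs a ha; ⟨b, ⟨hb, a, ha, hab⟩, hab⟩
  intro b hb
  rw [← hsep] at hb
  exact hb.2

section MaxPlus

variable {n : ℕ} {A : Matrix (Fin n) (Fin n) (WithBot ℝ)} {x y : Fin n → WithBot ℝ}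
  {U V : Set (Fin n)} {ε : ℝ}

theorem le_mpApply (x : Fin n → WithBot ℝ) (i j : Fin n) : A i j + x j ≤ mpApply A x i :=
  Finset.le_sup (f := fun j => A i j + x j) (Finset.mem_univ j)

theorem mpApply_mono (h : x ≤ y) (i : Fin n) : mpApply A x i ≤ mpApply A y i :=
  Finset.sup_mono_fun fun j _ => add_le_add_right (h j) _

theorem exists_mpApply_eq (x : Fin n → WithBot ℝ) (i : Fin n) :
    ∃ j, mpApply A x i = A i j + x j := by
  obtain ⟨j, -, hj⟩ :=
    Finset.exists_mem_eq_sup Finset.univ ⟨i, Finset.mem_univ i⟩ fun j => A i j + x j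
  exact ⟨j, hj⟩

theorem mpApply_add_le {c : WithBot ℝ} (h : ∀ j, x j + c ≤ y j) (i : Fin n) :
    mpApply A x i + c ≤ mpApply A y i := by
  obtain ⟨j, hj⟩ := exists_mpApply_eq (A := A) x i
  rw [hj, add_assoc]
  exact (add_le_add_right (h j) _).trans (le_mpApply y i j)

theorem Arc.mpApply_eq {k j : Fin n} (hx : ∀ i, x i ≤ mpApply A x i) (h : Arc A x k j) :
    mpApply A x j = x j :=
  le_antisymm (Finset.sup_le fun l _ => h.2.2.2 l) (hx j)

theorem arc_of_add_eq {k j : Fin n} (hj : x j ≠ ⊥) (hsat : mpApply A x j ≤ x j)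
    (h : A j k + x k = x j) : Arc A x k j :=
  ⟨fun hk => hj (by rw [← h, hk, WithBot.add_bot]), hj, h,
    fun l => (le_mpApply x j l).trans hsat⟩

theorem eventually_le_add_neg_of_lt {a b : WithBot ℝ} (h : a < b) :
    ∀ᶠ ε in 𝓝[>] (0 : ℝ), a ≤ b + ((-ε : ℝ) : WithBot ℝ) := by
  induction a using WithBot.recBotCoe with
  | bot => exact .of_forall fun _ => bot_le
  | coe r =>
    induction b using WithBot.recBotCoe with
    | bot => exact absurd h not_lt_bot
    | coe s =>
      filter_upwards [Ioo_mem_nhdsGT (sub_pos.2 (WithBot.coe_lt_coe.1 h))] with ε hε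
      rw [← WithBot.coe_add, WithBot.coe_le_coe]
      linarith [hε.2]

theorem exists_pos_forall_le_mpApply_add_neg (x : Fin n → WithBot ℝ) :
    ∃ ε > 0, ∀ i, x i < mpApply A x i → x i ≤ mpApply A x i + ((-ε : ℝ) : WithBot ℝ) := by
  have h : ∀ᶠ ε in 𝓝[>] (0 : ℝ),
      ∀ i, x i < mpApply A x i → x i ≤ mpApply A x i + ((-ε : ℝ) : WithBot ℝ) := by
    refine Filter.eventually_all.2 fun i => ?_
    by_cases hi : x i < mpApply A x i
    · exact (eventually_le_add_neg_of_lt hi).mono fun _ h _ => h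
    · exact .of_forall fun _ h => absurd h hi
  obtain ⟨ε, hε, hpos⟩ := (h.and self_mem_nhdsWithin).exists
  exact ⟨ε, hpos, hε⟩

/-- The sets on which `x` can be lowered by a small `ε > 0` without leaving `𝒳`. -/
def Lowerable (A : Matrix (Fin n) (Fin n) (WithBot ℝ)) (x : Fin n → WithBot ℝ)
    (U : Set (Fin n)) : Prop :=
  U ⊆ Supp x ∧ U.Nonempty ∧ ∀ k j, Arc A x k j → j ∉ U → ∃ l ∉ U, Arc A x l j

def lowerOn (U : Set (Fin n)) (ε : ℝ) (x : Fin n → WithBot ℝ) (i : Fin n) : WithBot ℝ :=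
  if i ∈ U then x i + ((-ε : ℝ) : WithBot ℝ) else x i

theorem lowerOn_of_mem {i : Fin n} (hi : i ∈ U) :
    lowerOn U ε x i = x i + ((-ε : ℝ) : WithBot ℝ) := if_pos hi

theorem lowerOn_of_notMem {i : Fin n} (hi : i ∉ U) : lowerOn U ε x i = x i := if_neg hi

theorem add_coe_neg_le_self (a : WithBot ℝ) (hε : 0 ≤ ε) : a + ((-ε : ℝ) : WithBot ℝ) ≤ a :=
  add_le_of_nonpos_right (by exact_mod_cast neg_nonpos.2 hε)

theorem lowerOn_le (hε : 0 ≤ ε) : lowerOn U ε x ≤ x := fun i => by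
  unfold lowerOn
  split_ifs
  exacts [add_coe_neg_le_self _ hε, le_rfl]

theorem add_neg_le_lowerOn (hε : 0 ≤ ε) (i : Fin n) :
    x i + ((-ε : ℝ) : WithBot ℝ) ≤ lowerOn U ε x i := by
  unfold lowerOn
  split_ifs
  exacts [le_rfl, add_coe_neg_le_self _ hε]

theorem lowerOn_ne (hε : 0 < ε) (hU : Lowerable A x U) : lowerOn U ε x ≠ x := by
  obtain ⟨u, hu⟩ := hU.2.1
  obtain ⟨r, hr⟩ := WithBot.ne_bot_iff_exists.1 (hU.1 hu)
  intro h
  have hru := congrFun h u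
  rw [lowerOn_of_mem hu, ← hr, ← WithBot.coe_add, WithBot.coe_inj] at hru
  linarith

theorem lowerOn_mem_superEig (hx : x ∈ SuperEig A) (hU : Lowerable A x U) (hε : 0 < ε)
    (hgap : ∀ i, x i < mpApply A x i → x i ≤ mpApply A x i + ((-ε : ℝ) : WithBot ℝ)) :
    lowerOn U ε x ∈ SuperEig A := by
  have hmp (i : Fin n) : mpApply A x i + ((-ε : ℝ) : WithBot ℝ) ≤ mpApply A (lowerOn U ε x) i :=
    mpApply_add_le (add_neg_le_lowerOn hε.le) i
  refine ⟨fun i => ?_, fun h => ?_⟩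
  · by_cases hiU : i ∈ U
    · rw [lowerOn_of_mem hiU]
      exact (add_le_add_left (hx.1 i) _).trans (hmp i)
    rw [lowerOn_of_notMem hiU]
    rcases (hx.1 i).lt_or_eq with hlt | heq
    · exact (hgap i hlt).trans (hmp i)
    by_cases hi : x i = ⊥
    · rw [hi]
      exact bot_le
    obtain ⟨k, hk⟩ := exists_mpApply_eq (A := A) x i
    obtain ⟨l, hlU, hl⟩ := hU.2.2 k i (arc_of_add_eq hi heq.ge (hk ▸ heq).symm) hiU
    calc x i = A i l + lowerOn U ε x l := by rw [lowerOn_of_notMem hlU, hl.2.2.1]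
      _ ≤ _ := le_mpApply _ i l
  · obtain ⟨u, hu⟩ := hU.2.1
    have hbot := congrFun h u
    rw [lowerOn_of_mem hu, WithBot.add_eq_bot] at hbot
    exact hbot.elim (hU.1 hu) WithBot.coe_ne_bot

theorem not_isExtremal_of_lowerable (hx : x ∈ SuperEig A) (hU : Lowerable A x U)
    (hV : Lowerable A x V) (hUV : Disjoint U V) : ¬ IsExtremal A x := by
  obtain ⟨ε, hε, hgap⟩ := exists_pos_forall_le_mpApply_add_neg (A := A) x
  have hsup : x = fun i => lowerOn U ε x i ⊔ lowerOn V ε x i := by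
    funext i
    by_cases hiU : i ∈ U
    · rw [lowerOn_of_notMem (hUV.notMem_of_mem_left hiU), sup_eq_right.2 (lowerOn_le hε.le i)]
    · rw [lowerOn_of_notMem hiU, sup_eq_left.2 (lowerOn_le hε.le i)]
  intro hext
  rcases hext.2 _ (Or.inl (lowerOn_mem_superEig hx hU hε hgap))
      _ (Or.inl (lowerOn_mem_superEig hx hV hε hgap)) hsup with h | h
  exacts [lowerOn_ne hε hU h.symm, lowerOn_ne hε hV h.symm]

theorem lowerable_setOf_lt (hx : x ∈ SuperEig A) (hy : y ∈ SuperEig A) (hyx : y ≤ x)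
    (hne : y ≠ x) : Lowerable A x {i | y i < x i} := by
  refine ⟨fun i hi => (bot_le.trans_lt hi).ne', ?_, fun k j hkj hj => ?_⟩
  · obtain ⟨i, hi⟩ := Function.ne_iff.1 hne
    exact ⟨i, (hyx i).lt_of_ne hi⟩
  have hyj : y j = x j := (hyx j).antisymm (not_lt.1 hj)
  have hmpx : mpApply A x j = x j := hkj.mpApply_eq hx.1
  have hmpy : mpApply A y j = x j :=
    le_antisymm (hmpx ▸ mpApply_mono hyx j) (hyj ▸ hy.1 j)
  obtain ⟨l, hl⟩ := exists_mpApply_eq (A := A) y j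
  have hxl : A j l + x l = x j :=
    le_antisymm (hmpx ▸ le_mpApply x j l) (hmpy ▸ hl ▸ add_le_add_right (hyx l) _)
  have hAl : A j l ≠ ⊥ := fun h => hkj.2.1 (by rw [← hxl, h, WithBot.bot_add])
  have hyl : y l = x l := WithBot.add_left_cancel hAl (hl.symm.trans (hmpy.trans hxl.symm))
  exact ⟨l, fun h => h.ne hyl, arc_of_add_eq hkj.2.1 hmpx.le hxl⟩

theorem exists_lowerable_of_not_isExtremal (hx : x ∈ SuperEig A) (h : ¬ IsExtremal A x) :
    ∃ U V, Lowerable A x U ∧ Lowerable A x V ∧ Disjoint U V := by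
  have h' : ¬ ∀ y ∈ SuperEig' A, ∀ z ∈ SuperEig' A, x = (fun i => y i ⊔ z i) → x = y ∨ x = z :=
    fun hall => h ⟨Or.inl hx, hall⟩
  push Not at h'
  obtain ⟨y, hy, z, hz, hxyz, hxy, hxz⟩ := h'
  have hsummand {y z : Fin n → WithBot ℝ} (hy : y ∈ SuperEig' A)
      (hxyz : x = fun i => y i ⊔ z i) (hxz : x ≠ z) : y ∈ SuperEig A ∧ y ≤ x := by
    refine ⟨hy.resolve_right fun hbot => hxz ?_, fun i => hxyz ▸ le_sup_left⟩
    rw [hxyz, Set.mem_singleton_iff.1 hbot]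
    simp
  obtain ⟨hy', hyx⟩ := hsummand hy hxyz hxz
  obtain ⟨hz', hzx⟩ := hsummand hz (by rw [hxyz]; simp only [sup_comm]) hxy
  refine ⟨_, _, lowerable_setOf_lt hx hy' hyx (Ne.symm hxy),
    lowerable_setOf_lt hx hz' hzx (Ne.symm hxz), Set.disjoint_left.2 fun i hyi hzi => ?_⟩
  exact (max_lt hyi hzi).ne (congrFun hxyz i).symm

theorem isExtremal_iff_not_exists_lowerable (hx : x ∈ SuperEig A) :
    IsExtremal A x ↔ ¬ ∃ U V, Lowerable A x U ∧ Lowerable A x V ∧ Disjoint U V :=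
  ⟨fun hext ⟨_, _, hU, hV, hUV⟩ => not_isExtremal_of_lowerable hx hU hV hUV hext,
    fun h => by_contra fun hext => h (exists_lowerable_of_not_isExtremal hx hext)⟩

end MaxPlus

section TangentDigraph

variable {n : ℕ} {A : Matrix (Fin n) (Fin n) (WithBot ℝ)} {x : Fin n → WithBot ℝ}
  {S U W : Set (Fin n)}

def SourceFree (A : Matrix (Fin n) (Fin n) (WithBot ℝ)) (x : Fin n → WithBot ℝ)
    (S : Set (Fin n)) : Prop :=
  ∀ j ∈ S, ∃ k ∈ S, Arc A x k j

def Reach (A : Matrix (Fin n) (Fin n) (WithBot ℝ)) (x : Fin n → WithBot ℝ)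
    (S : Set (Fin n)) : Set (Fin n) :=
  {b | ∃ a ∈ S, Relation.ReflTransGen (Arc A x) a b}

theorem SourceFree.subset_supp (hS : SourceFree A x S) : S ⊆ Supp x := fun j hj =>
  let ⟨_, _, h⟩ := hS j hj
  h.2.1

theorem lowerable_of_forall_arc_mem (hU : U ⊆ Supp x) (hne : U.Nonempty)
    (hcl : ∀ a b, Arc A x a b → a ∈ U → b ∈ U) : Lowerable A x U :=
  ⟨hU, hne, fun k j hkj hj => ⟨k, fun hk => hj (hcl k j hkj hk), hkj⟩⟩

theorem SourceFree.lowerable_supp_diff (hS : SourceFree A x S) (hne : (Supp x \ S).Nonempty) :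
    Lowerable A x (Supp x \ S) := by
  refine ⟨Set.sdiff_subset, hne, fun k j hkj hj => ?_⟩
  have hjS : j ∈ S := by_contra fun h => hj ⟨hkj.2.1, h⟩
  obtain ⟨l, hl, hlj⟩ := hS j hjS
  exact ⟨l, fun h => h.2 hl, hlj⟩

theorem IsolatedSet.exists_lowerable (hW : IsolatedSet A x W) (hne : W.Nonempty)
    (hss : W ⊂ Supp x) : ∃ U V, Lowerable A x U ∧ Lowerable A x V ∧ Disjoint U V :=
  ⟨W, Supp x \ W, lowerable_of_forall_arc_mem hW.1 hne fun a b h => (hW.2 a b h).1,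
    lowerable_of_forall_arc_mem Set.sdiff_subset (Set.nonempty_of_ssubset hss)
      fun a b h ha => ⟨h.2.1, fun hb => ha.2 ((hW.2 a b h).2 hb)⟩,
    Set.disjoint_sdiff_right⟩

theorem VarNode.lowerable_singleton {i : Fin n} (hv : VarNode A x i) : Lowerable A x {i} := by
  have hi : x i ≠ ⊥ := by rcases hv with hv | hv <;> exact hv.1
  refine ⟨Set.singleton_subset_iff.2 hi, Set.singleton_nonempty i, fun k j hkj hj => ?_⟩
  rw [Set.mem_singleton_iff] at hj
  by_cases hki : k = i
  · subst hki
    rcases hv with hv | hv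
    · exact absurd (hv.2 j hkj) hj
    · obtain ⟨l, hlk, hl⟩ := hv.2 j hj hkj
      exact ⟨l, hlk, hl⟩
  · exact ⟨k, hki, hkj⟩

theorem subset_reach : S ⊆ Reach A x S := fun a ha => ⟨a, ha, .refl⟩

theorem mem_reach_of_arc {a b : Fin n} (ha : a ∈ Reach A x S) (hab : Arc A x a b) :
    b ∈ Reach A x S :=
  let ⟨c, hc, hca⟩ := ha
  ⟨c, hc, hca.tail hab⟩

theorem reach_subset (hSW : S ⊆ W) (hW : ∀ a b, Arc A x a b → a ∈ W → b ∈ W) :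
    Reach A x S ⊆ W := by
  rintro b ⟨a, ha, hab⟩
  induction hab with
  | refl => exact hSW ha
  | tail _ hcb ih => exact hW _ _ hcb ih

theorem SourceFree.reach (hS : SourceFree A x S) : SourceFree A x (Reach A x S) := by
  rintro b ⟨a, ha, hab⟩
  rcases hab.cases_tail with rfl | ⟨c, hac, hcb⟩
  · obtain ⟨k, hk, hkb⟩ := hS b ha
    exact ⟨k, subset_reach hk, hkb⟩
  · exact ⟨c, ⟨a, ha, hac⟩, hcb⟩

theorem SourceFree.exists_lowerable (hS : SourceFree A x S) (hne : S.Nonempty)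
    (hreach : (Supp x \ Reach A x S).Nonempty) :
    ∃ U V, Lowerable A x U ∧ Lowerable A x V ∧ Disjoint U V :=
  ⟨Reach A x S, Supp x \ Reach A x S,
    lowerable_of_forall_arc_mem hS.reach.subset_supp (hne.mono subset_reach)
      fun _ _ h ha => mem_reach_of_arc ha h,
    hS.reach.lowerable_supp_diff hreach, Set.disjoint_sdiff_right⟩

end TangentDigraph

section Cycles

variable {n : ℕ} {A : Matrix (Fin n) (Fin n) (WithBot ℝ)} {x : Fin n → WithBot ℝ}
  {S : Set (Fin n)} {k : ℕ} {c : ℕ → Fin n}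

theorem IsCycle.nonempty (hc : IsCycle A x k c) : (c '' Set.Iio k).Nonempty :=
  ⟨c 0, 0, hc.1, rfl⟩

theorem IsCycle.sourceFree (hc : IsCycle A x k c) : SourceFree A x (c '' Set.Iio k) := by
  rintro _ ⟨t, ht : t < k, rfl⟩
  have hpred : ((t + k - 1) % k + 1) % k = t := by
    rw [Nat.mod_add_mod, Nat.sub_add_cancel (by omega), Nat.add_mod_right,
      Nat.mod_eq_of_lt ht]
  have hs : (t + k - 1) % k < k := Nat.mod_lt _ hc.1
  have harc := hc.2 _ hs
  rw [hpred] at harc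
  exact ⟨_, ⟨_, hs, rfl⟩, harc⟩

theorem isCycle_iterate {p : Fin n → Fin n} {y : Fin n} {q : ℕ} (hq : 1 ≤ q) (hy : p^[q] y = y)
    (harc : ∀ t, Arc A x (p (p^[t] y)) (p^[t] y)) : IsCycle A x q fun t => p^[q - t] y := by
  refine ⟨hq, fun t ht => ?_⟩
  have hwrap : p^[q - (t + 1) % q] y = p^[q - (t + 1)] y := by
    rcases (show t + 1 ≤ q from ht).lt_or_eq with h | h
    · rw [Nat.mod_eq_of_lt h]
    · rw [h, Nat.mod_self, Nat.sub_self, Nat.sub_zero, hy, Function.iterate_zero_apply]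
  show Arc A x (p^[q - t] y) (p^[q - (t + 1) % q] y)
  rw [hwrap, show q - t = q - (t + 1) + 1 by omega, Function.iterate_succ_apply']
  exact harc _

theorem SourceFree.exists_isCycle (hS : SourceFree A x S) (hne : S.Nonempty) :
    ∃ k c, IsCycle A x k c ∧ c '' Set.Iio k ⊆ S := by
  obtain ⟨s, hs⟩ := hne
  have : Nonempty (Fin n) := ⟨s⟩
  choose! p hpS hp using hS
  have horb (t : ℕ) : p^[t] s ∈ S := by
    induction t with
    | zero => exact hs
    | succ t ih => rw [Function.iterate_succ_apply']; exact hpS _ ih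
  obtain ⟨a, b, hab, heq⟩ := Finite.exists_ne_map_eq_of_infinite fun t => p^[t] s
  wlog hlt : a < b generalizing a b
  · exact this b a hab.symm heq.symm (by omega)
  refine ⟨b - a, fun t => p^[b - a - t] (p^[a] s), isCycle_iterate (by omega) ?_
    (fun t => hp _ ?_), ?_⟩
  · rw [← Function.iterate_add_apply, Nat.sub_add_cancel hlt.le]
    exact heq.symm
  · rw [← Function.iterate_add_apply]
    exact horb _
  · rintro _ ⟨t, -, rfl⟩
    show p^[b - a - t] (p^[a] s) ∈ S
    rw [← Function.iterate_add_apply]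
    exact horb _

end Cycles

section SolePredecessors

variable {n : ℕ} {A : Matrix (Fin n) (Fin n) (WithBot ℝ)} {x : Fin n → WithBot ℝ}
  {S T : Set (Fin n)}

def IsSolePred (A : Matrix (Fin n) (Fin n) (WithBot ℝ)) (x : Fin n → WithBot ℝ)
    (i j : Fin n) : Prop :=
  j ≠ i ∧ Arc A x i j ∧ ∀ k, Arc A x k j → k = i

theorem leftUnique_isSolePred : Relator.LeftUnique (IsSolePred A x) :=
  fun _ _ _ hi hi' => hi'.2.2 _ hi.2.1

theorem invariable_iff_exists_isSolePred {i : Fin n} :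
    Invariable A x i ↔ ∃ j, IsSolePred A x i j :=
  ⟨fun h => h.2, fun ⟨j, h⟩ => ⟨h.2.1.1, j, h⟩⟩

theorem iIVar_of_not_invariable {i : Fin n} (hi : x i ≠ ⊥) (h : ¬ Invariable A x i) :
    IIVar A x i := by
  refine ⟨hi, fun j hji hij => by_contra fun hno => h ⟨hi, j, hji, hij, fun k hkj => ?_⟩⟩
  push Not at hno
  exact by_contra fun hki => hno k hki hkj

theorem subsingleton_supp_diff_invariable (h3 : ∀ i j, VarNode A x i → VarNode A x j → i = j) :
    (Supp x \ {i | Invariable A x i}).Subsingleton := fun _ ha _ hb =>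
  h3 _ _ (.inr (iIVar_of_not_invariable ha.1 ha.2)) (.inr (iIVar_of_not_invariable hb.1 hb.2))

/-- Invariable nodes inject into the nodes with a sole predecessor, and at most one node of the
support is not invariable. -/
theorem subsingleton_supp_diff_solePred (h3 : ∀ i j, VarNode A x i → VarNode A x j → i = j) :
    (Supp x \ {j | ∃ i, IsSolePred A x i j}).Subsingleton := by
  set N := {j | ∃ i, IsSolePred A x i j}
  set I := {i | Invariable A x i}
  have hIN : I.ncard ≤ N.ncard := Set.ncard_le_ncard_of_leftUnique leftUnique_isSolePred
    fun i hi => let ⟨j, hj⟩ := invariable_iff_exists_isSolePred.1 hi; ⟨j, ⟨i, hj⟩, hj⟩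
  have hE : (Supp x \ I).ncard ≤ 1 :=
    Set.ncard_le_one_iff_subsingleton.2 (subsingleton_supp_diff_invariable h3)
  have hsupp : (Supp x).ncard ≤ I.ncard + (Supp x \ I).ncard :=
    (Set.ncard_le_ncard fun i hi => (em (i ∈ I)).imp id fun h => ⟨hi, h⟩).trans
      (Set.ncard_union_le _ _)
  have hNsupp : N ⊆ Supp x := fun j ⟨_, h⟩ => h.2.1.2.1
  have hdiff := Set.ncard_sdiff_add_ncard_of_subset hNsupp
  exact Set.ncard_le_one_iff_subsingleton.1 (by omega)

theorem SourceFree.mem_of_arc (hS : SourceFree A x S) (hN : ∀ j ∈ S, ∃ i, IsSolePred A x i j)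
    {k j : Fin n} (hkj : Arc A x k j) (hj : j ∈ S) : k ∈ S := by
  obtain ⟨i, hi⟩ := hN j hj
  obtain ⟨l, hl, hlj⟩ := hS j hj
  rwa [hi.2.2 k hkj, ← hi.2.2 l hlj]

theorem exists_lowerable_of_disjoint_sourceFree
    (hM : (Supp x \ {j | ∃ i, IsSolePred A x i j}).Subsingleton)
    (hS : SourceFree A x S) (hT : SourceFree A x T) (hSne : S.Nonempty) (hTne : T.Nonempty)
    (hST : Disjoint S T) : ∃ U V, Lowerable A x U ∧ Lowerable A x V ∧ Disjoint U V := by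
  wlog hSN : ∀ j ∈ S, ∃ i, IsSolePred A x i j generalizing S T
  · refine this hT hS hTne hSne hST.symm fun b hb => by_contra fun hbN => hSN fun a ha => ?_
    refine by_contra fun haN => hST.ne_of_mem ha hb ?_
    exact hM ⟨hS.subset_supp ha, haN⟩ ⟨hT.subset_supp hb, hbN⟩
  obtain ⟨s, hs⟩ := hSne
  have hreach : Reach A x T ⊆ Sᶜ :=
    reach_subset hST.subset_compl_left fun a b hab ha hb => ha (hS.mem_of_arc hSN hab hb)
  exact hT.exists_lowerable hTne ⟨s, hS.subset_supp hs, fun h => hreach h hs⟩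

theorem not_disjoint_of_sourceFree
    (h2 : ∀ (k₁ k₂ : ℕ) (c₁ c₂ : ℕ → Fin n), IsCycle A x k₁ c₁ → IsCycle A x k₂ c₂ →
      ¬ Disjoint (c₁ '' Set.Iio k₁) (c₂ '' Set.Iio k₂))
    (hS : SourceFree A x S) (hT : SourceFree A x T) (hSne : S.Nonempty) (hTne : T.Nonempty) :
    ¬ Disjoint S T := fun hST => by
  obtain ⟨k₁, c₁, hc₁, hc₁S⟩ := hS.exists_isCycle hSne
  obtain ⟨k₂, c₂, hc₂, hc₂T⟩ := hT.exists_isCycle hTne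
  exact h2 k₁ k₂ c₁ c₂ hc₁ hc₂ (hST.mono hc₁S hc₂T)

end SolePredecessors

section Main

variable {n : ℕ} {A : Matrix (Fin n) (Fin n) (WithBot ℝ)} {x : Fin n → WithBot ℝ}
  {U V : Set (Fin n)}

/-- The sole-successor relation permutes `U`, so every arc entering `U` starts in `U`, and by (i)
some arc leaves `U`. Its head also has a predecessor outside `U`, so it is the one node lacking a
sole predecessor; hence every node has a predecessor, and `Supp x \ U` is source-free like `U`. -/
theorem false_of_lowerable_of_forall_invariable
    (h1 : ∀ W : Set (Fin n), W.Nonempty → W ⊂ Supp x → ¬ IsolatedSet A x W)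
    (h2 : ∀ (k₁ k₂ : ℕ) (c₁ c₂ : ℕ → Fin n), IsCycle A x k₁ c₁ → IsCycle A x k₂ c₂ →
      ¬ Disjoint (c₁ '' Set.Iio k₁) (c₂ '' Set.Iio k₂))
    (hM : (Supp x \ {j | ∃ i, IsSolePred A x i j}).Subsingleton)
    (hU : Lowerable A x U) (hUinv : ∀ i ∈ U, Invariable A x i) (hV : Lowerable A x V)
    (hUV : Disjoint U V) : False := by
  have hsucc : ∀ i ∈ U, ∃ j ∈ U, IsSolePred A x i j := fun i hi => by
    obtain ⟨j, hj⟩ := invariable_iff_exists_isSolePred.1 (hUinv i hi)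
    refine ⟨j, by_contra fun hjU => ?_, hj⟩
    obtain ⟨l, hlU, hl⟩ := hU.2.2 i j hj.2.1 hjU
    exact hlU (hj.2.2 l hl ▸ hi)
  have hpred := Set.forall_exists_rel_of_leftUnique leftUnique_isSolePred hsucc
  have hUsf : SourceFree A x U := fun j hj =>
    let ⟨i, hi, hij⟩ := hpred j hj
    ⟨i, hi, hij.2.1⟩
  have hUin {k j : Fin n} (hkj : Arc A x k j) (hj : j ∈ U) : k ∈ U :=
    hUsf.mem_of_arc (fun j hj => let ⟨i, _, h⟩ := hpred j hj; ⟨i, h⟩) hkj hj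
  obtain ⟨v, hv⟩ := hV.2.1
  have hUss : U ⊂ Supp x :=
    (Set.ssubset_iff_of_subset hU.1).2 ⟨v, hV.1 hv, hUV.notMem_of_mem_right hv⟩
  obtain ⟨u, m, hum, hu, hm⟩ : ∃ u m, Arc A x u m ∧ u ∈ U ∧ m ∉ U := by
    by_contra hno
    push Not at hno
    exact h1 U hU.2.1 hUss ⟨hU.1, fun a b hab => ⟨hno a b hab, fun hb => hUin hab hb⟩⟩
  obtain ⟨l, hlU, hlm⟩ := hU.2.2 u m hum hm
  have hmM : m ∈ Supp x \ {j | ∃ i, IsSolePred A x i j} :=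
    ⟨hum.2.1, fun ⟨_, hi⟩ => hlU ((hi.2.2 l hlm).trans (hi.2.2 u hum).symm ▸ hu)⟩
  have hXsf : SourceFree A x (Supp x \ U) := by
    intro j hj
    obtain ⟨k, hkj⟩ : ∃ k, Arc A x k j := by
      by_cases hjN : ∃ i, IsSolePred A x i j
      · obtain ⟨i, hi⟩ := hjN
        exact ⟨i, hi.2.1⟩
      · exact hM ⟨hj.1, hjN⟩ hmM ▸ ⟨u, hum⟩
    obtain ⟨l, hl, hlj⟩ := hU.2.2 k j hkj hj.2
    exact ⟨l, ⟨hlj.1, hl⟩, hlj⟩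
  exact not_disjoint_of_sourceFree h2 hUsf hXsf hU.2.1 ⟨m, hum.2.1, hm⟩ Set.disjoint_sdiff_right

theorem not_exists_lowerable
    (h1 : ∀ W : Set (Fin n), W.Nonempty → W ⊂ Supp x → ¬ IsolatedSet A x W)
    (h2 : ∀ (k₁ k₂ : ℕ) (c₁ c₂ : ℕ → Fin n), IsCycle A x k₁ c₁ → IsCycle A x k₂ c₂ →
      ¬ Disjoint (c₁ '' Set.Iio k₁) (c₂ '' Set.Iio k₂))
    (h3 : ∀ i j, VarNode A x i → VarNode A x j → i = j) :
    ¬ ∃ U V, Lowerable A x U ∧ Lowerable A x V ∧ Disjoint U V := by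
  rintro ⟨U, V, hU, hV, hUV⟩
  wlog hUinv : ∀ i ∈ U, Invariable A x i generalizing U V
  · refine this V U hV hU hUV.symm fun b hb => by_contra fun hbI => hUinv fun a ha => ?_
    refine by_contra fun haI => hUV.ne_of_mem ha hb ?_
    exact subsingleton_supp_diff_invariable h3 ⟨hU.1 ha, haI⟩ ⟨hV.1 hb, hbI⟩
  exact false_of_lowerable_of_forall_invariable h1 h2 (subsingleton_supp_diff_solePred h3)
    hU hUinv hV hUV

end Main

/-- main theorem: `x` is an extremal in `𝒳'` iff (i) no nonempty proper
isolated subset of `Supp x`, (ii) no two node-disjoint cycles in `𝒟ₓ`, and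
(iii) at most one variable node. -/
theorem stmt14 {n : ℕ} (A : Matrix (Fin n) (Fin n) (WithBot ℝ)) (x : Fin n → WithBot ℝ)
    (hx : x ∈ SuperEig A) :
    IsExtremal A x ↔
      ((∀ W : Set (Fin n), W.Nonempty → W ⊂ Supp x → ¬ IsolatedSet A x W) ∧
        (∀ (k₁ k₂ : ℕ) (c₁ c₂ : ℕ → Fin n), IsCycle A x k₁ c₁ → IsCycle A x k₂ c₂ →
          ¬ Disjoint (c₁ '' Set.Iio k₁) (c₂ '' Set.Iio k₂)) ∧
        (∀ i j, VarNode A x i → VarNode A x j → i = j)) := by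
  rw [isExtremal_iff_not_exists_lowerable hx]
  refine ⟨fun hno => ?_, fun ⟨h1, h2, h3⟩ => not_exists_lowerable h1 h2 h3⟩
  have h3 : ∀ i j, VarNode A x i → VarNode A x j → i = j := fun i j hi hj =>
    by_contra fun hij => hno ⟨{i}, {j}, hi.lowerable_singleton, hj.lowerable_singleton,
      Set.disjoint_singleton.2 hij⟩
  refine ⟨fun W hW hWss hiso => hno (hiso.exists_lowerable hW hWss),
    fun k₁ k₂ c₁ c₂ hc₁ hc₂ hdisj => hno ?_, h3⟩
  exact exists_lowerable_of_disjoint_sourceFree (subsingleton_supp_diff_solePred h3)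
    hc₁.sourceFree hc₂.sourceFree hc₁.nonempty hc₂.nonempty hdisj
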